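/- Three-term contiguous relation (A&A comparison, fifth form): Let a,b,c,d,e ∈ ℂ with a,c,e ≠ 0, |bd/(qace)| < 1, and all denominators appearing below nonzero. Set Y_q = (a−b)(q−d) / ((1−b)(qa−d)) and Z_q = (1−a)(qb−d) / ((1−b)(qa−d)). Then ₃φ₂(a,c,e; b,d; q, bd/(ace)) = Y_q·₃φ₂(a, c, e; qb, d/q; q, bd/(ace)) + Z_q·₃φ₂(qa, c, e; qb, d; q, bd/(ace)). -/

import Mathlib

/-!
The relation holds term by term. Write `d = q w` and let `t k` be the `k`-th term of the left-hand
side. Shifting `(b, q w) ↦ (q b, w)` multiplies `t k` by `(1-b)(1-w qᵏ) / ((1-b qᵏ)(1-w))`, and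
shifting `(a, b) ↦ (q a, q b)` multiplies `(1-a) t k` by `(1-b)(1-a qᵏ) / (1-b qᵏ)`; with the given
`Y` and `Z` these multipliers add up to `1` because
`(a-b)(1-w qᵏ) + (b-w)(1-a qᵏ) = (a-w)(1-b qᵏ)`.
All three series converge by the ratio test: the ratio of consecutive terms tends to the argument
`b d / (a c e)`, whose modulus is `‖q‖ · ‖b d / (q a c e)‖ < 1`.
-/

open Filter Topology

noncomputable def qPoch (q x : ℂ) (k : ℕ) : ℂ :=
  ∏ i ∈ Finset.range k, (1 - x * q ^ i)

/-- The basic hypergeometric series ₃φ₂(a,c,e; b,d; q, z). -/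
noncomputable def phi32 (q z a c e b d : ℂ) : ℂ :=
  ∑' k : ℕ, (qPoch q a k * qPoch q c k * qPoch q e k) /
      (qPoch q b k * qPoch q d k * qPoch q q k) * z ^ k

section QPochhammer

variable (q x : ℂ) (k : ℕ)

theorem qPoch_succ : qPoch q x (k + 1) = qPoch q x k * (1 - x * q ^ k) :=
  Finset.prod_range_succ _ _

theorem qPoch_succ' : qPoch q x (k + 1) = (1 - x) * qPoch q (q * x) k := by
  simp only [qPoch, Finset.prod_range_succ', pow_succ, pow_zero, mul_one]
  rw [mul_comm]
  congr 1
  exact Finset.prod_congr rfl fun i _ => by ring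

variable {q x k}

theorem one_sub_mul_pow_ne_zero_of_qPoch_succ_ne_zero (h : qPoch q x (k + 1) ≠ 0) :
    1 - x * q ^ k ≠ 0 :=
  right_ne_zero_of_mul (qPoch_succ q x k ▸ h)

end QPochhammer

theorem tendsto_one_sub_mul_pow {q : ℂ} (hq : ‖q‖ < 1) (x : ℂ) :
    Tendsto (fun k : ℕ => 1 - x * q ^ k) atTop (𝓝 1) := by
  simpa using tendsto_const_nhds.sub ((tendsto_pow_atTop_nhds_zero_of_norm_lt_one hq).const_mul x)

theorem summable_of_succ_eq_mul {R : Type*} [NormedRing R] [CompleteSpace R] {f r : ℕ → R}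
    {l : R} (hl : ‖l‖ < 1) (hr : Tendsto r atTop (𝓝 l)) (hf : ∀ k, f (k + 1) = f k * r k) :
    Summable f := by
  obtain ⟨ρ, hlρ, hρ⟩ := exists_between hl
  refine summable_of_ratio_norm_eventually_le hρ ?_
  filter_upwards [hr.norm.eventually_lt_const hlρ] with k hk
  rw [hf, mul_comm]
  exact (norm_mul_le _ _).trans (by gcongr)

noncomputable def phi32Term (q z a c e b d : ℂ) (k : ℕ) : ℂ :=
  (qPoch q a k * qPoch q c k * qPoch q e k) /
      (qPoch q b k * qPoch q d k * qPoch q q k) * z ^ k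

theorem phi32_eq_tsum (q z a c e b d : ℂ) : phi32 q z a c e b d = ∑' k, phi32Term q z a c e b d k :=
  rfl

section Terms

variable (q z a c e b d : ℂ) (k : ℕ)

theorem phi32Term_succ :
    phi32Term q z a c e b d (k + 1) = phi32Term q z a c e b d k *
      ((1 - a * q ^ k) * (1 - c * q ^ k) * (1 - e * q ^ k) /
        ((1 - b * q ^ k) * (1 - d * q ^ k) * (1 - q * q ^ k)) * z) := by
  simp only [phi32Term, qPoch_succ, pow_succ, div_eq_mul_inv, mul_inv]
  ring

variable {q z}

theorem summable_phi32Term (hq : ‖q‖ < 1) (hz : ‖z‖ < 1) :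
    Summable (phi32Term q z a c e b d) := by
  refine summable_of_succ_eq_mul hz ?_ (phi32Term_succ q z a c e b d)
  have h := tendsto_one_sub_mul_pow hq
  simpa using ((((h a).mul (h c)).mul (h e)).div (((h b).mul (h d)).mul (h q))
    (by norm_num)).mul_const z

end Terms

section Contiguity

variable {q : ℂ} (z a c e : ℂ) {b w : ℂ} {k : ℕ}

theorem qPoch_mul_eq_div (hb : 1 - b ≠ 0) :
    qPoch q (q * b) k = qPoch q b k * (1 - b * q ^ k) / (1 - b) := by
  rw [← qPoch_succ, qPoch_succ', mul_div_cancel_left₀ _ hb]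

theorem phi32Term_mul_lower (hb : 1 - b ≠ 0) (hw : 1 - w * q ^ k ≠ 0) :
    phi32Term q z a c e (q * b) w k =
      (1 - b) * (1 - w * q ^ k) / ((1 - b * q ^ k) * (1 - w)) *
        phi32Term q z a c e b (q * w) k := by
  have hW : qPoch q w k = (1 - w) * qPoch q (q * w) k / (1 - w * q ^ k) := by
    rw [← qPoch_succ', qPoch_succ, mul_div_cancel_right₀ _ hw]
  simp only [phi32Term, qPoch_mul_eq_div hb, hW, div_eq_mul_inv, mul_inv, inv_inv]
  ring

theorem one_sub_mul_phi32Term_mul_upper (d : ℂ) (hb : 1 - b ≠ 0) :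
    (1 - a) * phi32Term q z (q * a) c e (q * b) d k =
      (1 - b) * (1 - a * q ^ k) / (1 - b * q ^ k) * phi32Term q z a c e b d k := by
  have hA : (1 - a) * qPoch q (q * a) k = qPoch q a k * (1 - a * q ^ k) := by
    rw [← qPoch_succ', qPoch_succ]
  simp only [phi32Term, qPoch_mul_eq_div hb, div_eq_mul_inv, mul_inv, inv_inv]
  linear_combination (qPoch q c k * qPoch q e k * z ^ k * (1 - b) * (qPoch q b k)⁻¹ *
    (1 - b * q ^ k)⁻¹ * (qPoch q d k)⁻¹ * (qPoch q q k)⁻¹) * hA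

theorem phi32Term_contiguous (hb : ∀ k, 1 - b * q ^ k ≠ 0) (hw : ∀ k, 1 - w * q ^ k ≠ 0)
    (haw : a - w ≠ 0) :
    phi32Term q z a c e b (q * w) k =
      (a - b) * (1 - w) / ((1 - b) * (a - w)) * phi32Term q z a c e (q * b) w k +
      (1 - a) * (b - w) / ((1 - b) * (a - w)) * phi32Term q z (q * a) c e (q * b) (q * w) k := by
  have hb0 : 1 - b ≠ 0 := by simpa using hb 0
  have hw0 : 1 - w ≠ 0 := by simpa using hw 0
  have hbk := hb k
  have coeff_sum : (a - b) * (1 - w) / ((1 - b) * (a - w)) *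
        ((1 - b) * (1 - w * q ^ k) / ((1 - b * q ^ k) * (1 - w))) +
      (b - w) / ((1 - b) * (a - w)) * ((1 - b) * (1 - a * q ^ k) / (1 - b * q ^ k)) = 1 := by
    field_simp
    ring
  rw [phi32Term_mul_lower z a c e hb0 (hw k)]
  linear_combination (-phi32Term q z a c e b (q * w) k) * coeff_sum -
    (b - w) / ((1 - b) * (a - w)) * one_sub_mul_phi32Term_mul_upper z a c e (q * w) hb0

theorem phi32_contiguous (hq : ‖q‖ < 1) (hz : ‖z‖ < 1) (hb : ∀ k, 1 - b * q ^ k ≠ 0)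
    (hw : ∀ k, 1 - w * q ^ k ≠ 0) (haw : a - w ≠ 0) :
    phi32 q z a c e b (q * w) =
      (a - b) * (1 - w) / ((1 - b) * (a - w)) * phi32 q z a c e (q * b) w +
      (1 - a) * (b - w) / ((1 - b) * (a - w)) * phi32 q z (q * a) c e (q * b) (q * w) := by
  simp only [phi32_eq_tsum]
  rw [tsum_congr fun k => phi32Term_contiguous z a c e hb hw haw (k := k),
    ((summable_phi32Term _ _ _ _ _ hq hz).mul_left _).tsum_add
      ((summable_phi32Term _ _ _ _ _ hq hz).mul_left _), tsum_mul_left, tsum_mul_left]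

end Contiguity

theorem threeTerm_AA5_general (q a b c d e Y Z : ℂ)
    (hq0 : 0 < ‖q‖) (hq1 : ‖q‖ < 1)
    (hconv : ‖b * d / (q * a * c * e)‖ < 1)
    (hY : Y = (a - b) * (q - d) / ((1 - b) * (q * a - d)))
    (hZ : Z = (1 - a) * (q * b - d) / ((1 - b) * (q * a - d)))
    (h2 : q * a - d ≠ 0)
    (hp0 : ∀ k, qPoch q (b) k ≠ 0) (hp3 : ∀ k, qPoch q (d / q) k ≠ 0) :
    phi32 q (b * d / (a * c * e)) a c e b d =
      Y * phi32 q (b * d / (a * c * e)) a c e (q * b) (d / q) +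
      Z * phi32 q (b * d / (a * c * e)) (q * a) c e (q * b) d := by
  have hq : q ≠ 0 := norm_pos_iff.mp hq0
  have hz : ‖b * d / (a * c * e)‖ < 1 := by
    rw [← mul_div_mul_left _ _ hq, mul_div_assoc, norm_mul, ← mul_assoc, ← mul_assoc]
    exact mul_lt_one_of_nonneg_of_lt_one_left (norm_nonneg q) hq1 hconv.le
  obtain ⟨w, rfl⟩ : ∃ w, d = q * w := ⟨d / q, (mul_div_cancel₀ d hq).symm⟩
  rw [mul_div_cancel_left₀ w hq] at hp3 ⊢
  have hb : ∀ k, 1 - b * q ^ k ≠ 0 := fun k =>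
    one_sub_mul_pow_ne_zero_of_qPoch_succ_ne_zero (hp0 (k + 1))
  have hw : ∀ k, 1 - w * q ^ k ≠ 0 := fun k =>
    one_sub_mul_pow_ne_zero_of_qPoch_succ_ne_zero (hp3 (k + 1))
  have haw : a - w ≠ 0 := fun h => h2 (by rw [← mul_sub, h, mul_zero])
  rw [hY, hZ, show q - q * w = q * (1 - w) by ring, show q * a - q * w = q * (a - w) by ring,
    show q * b - q * w = q * (b - w) by ring]
  convert phi32_contiguous _ a c e hq1 hz hb hw haw using 3 <;> field_simp

theorem threeTerm_AA5 (q a b c d e Y Z : ℂ)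
    (hq0 : 0 < ‖q‖) (hq1 : ‖q‖ < 1)
    (ha : a ≠ 0) (hc : c ≠ 0) (he : e ≠ 0)
    (hconv : ‖b * d / (q * a * c * e)‖ < 1)
    (hY : Y = (a - b) * (q - d) / ((1 - b) * (q * a - d)))
    (hZ : Z = (1 - a) * (q * b - d) / ((1 - b) * (q * a - d)))
    (h1 : 1 - b ≠ 0) (h2 : q * a - d ≠ 0)
    (hp0 : ∀ k, qPoch q (b) k ≠ 0) (hp1 : ∀ k, qPoch q (d) k ≠ 0) (hp2 : ∀ k, qPoch q (q * b) k ≠ 0) (hp3 : ∀ k, qPoch q (d / q) k ≠ 0) :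
    phi32 q (b * d / (a * c * e)) a c e b d =
      Y * phi32 q (b * d / (a * c * e)) a c e (q * b) (d / q) +
      Z * phi32 q (b * d / (a * c * e)) (q * a) c e (q * b) d :=
  threeTerm_AA5_general q a b c d e Y Z hq0 hq1 hconv hY hZ h2 hp0 hp3
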